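/- Let A be a d×d real symmetric positive definite matrix whose eigenvalues all lie in [ℓ, L] with 0 < ℓ ≤ L and κ = L/ℓ > 1, let b ∈ ℝ^d, f(x) = ½xᵀAx − bᵀx, and x* = A⁻¹b. Fix η > 0 and let s and h be the ESGD parameters. If the iterates satisfy x_{n+1} − x* = R_s(−hA)(x_n − x*), then f(x_{n+1}) − f(x*) ≤ α_s(η)² · (f(x_n) − f(x*)) for every n. -/

import Mathlib

open Polynomial Matrix

noncomputable section

/-- The degree-`n` Chebyshev polynomial of the first kind over `ℝ`,
characterized by `T_n (cos θ) = cos (n θ)`. -/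
def chebT (n : ℕ) : Polynomial ℝ := Polynomial.Chebyshev.T ℝ (n : ℤ)

/-- `ω₀ = 1 + η / s²`. -/
def omega0 (s : ℕ) (η : ℝ) : ℝ := 1 + η / (s : ℝ) ^ 2

/-- `ω₁ = T_s(ω₀) / T_s'(ω₀)`. -/
def omega1 (s : ℕ) (η : ℝ) : ℝ :=
  (chebT s).eval (omega0 s η) / (Polynomial.derivative (chebT s)).eval (omega0 s η)

/-- `α_s(η) = 1 / T_s(ω₀)`. -/
def alphaS (s : ℕ) (η : ℝ) : ℝ := ((chebT s).eval (omega0 s η))⁻¹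

/-- The stability polynomial `R_s(z) = T_s(ω₀ + ω₁ z) / T_s(ω₀)`. -/
def RsPoly (s : ℕ) (η : ℝ) : Polynomial ℝ :=
  Polynomial.C (alphaS s η) *
    (chebT s).comp (Polynomial.C (omega0 s η) + Polynomial.C (omega1 s η) * Polynomial.X)

/-- The polynomial `B_s` with `ζ · B_s(ζ) = R_s(ζ) − 1`. -/
def BsPoly (s : ℕ) (η : ℝ) : Polynomial ℝ := (RsPoly s η - 1) /ₘ Polynomial.X

/-- The ESGD stage number `s = ⌈√((κ−1)η/2)⌉`. -/
def stages (κ η : ℝ) : ℕ := ⌈Real.sqrt ((κ - 1) * η / 2)⌉₊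

/-- The ESGD step size `h = (ω₀ − 1)/(ω₁ ℓ)`. -/
def stepSize (κ η ℓ : ℝ) : ℝ :=
  (omega0 (stages κ η) η - 1) / (omega1 (stages κ η) η * ℓ)

/-- The constant `C(η) = ω₁ α_s(η) / (ω₀ − 1)`. -/
def Ceta (s : ℕ) (η : ℝ) : ℝ := omega1 s η * alphaS s η / (omega0 s η - 1)

end

/-! The error obeys `eₙ₊₁ = p(A) eₙ` with `p(μ) = R_s(-hμ)`, and
`f(y) - f(x*) = ½ (y - x*)ᵀ A (y - x*)`. By the functional calculus of the symmetric matrix `A`,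
`p(A) A p(A) ≤ α² A` in the Loewner order as soon as `p(μ)² ≤ α²` on the spectrum.
For `μ ∈ [ℓ, L]` the choice of `h` gives `ω₀ - ω₁ h μ = 1 - (η / s²)(μ / ℓ - 1)`, and the choice
of `s` makes `(η / s²)(κ - 1) ≤ 2`, so this argument lies in `[-1, 1]`, where `|T_s| ≤ 1`;
hence `|R_s(-hμ)| ≤ α_s(η)`. -/

open scoped MatrixOrder

namespace Polynomial.Chebyshev

open Real

theorem eval_U_real_pos {n : ℤ} (hn : 0 ≤ n) {x : ℝ} (hx : 1 < x) : 0 < (U ℝ n).eval x := by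
  have hθ : 0 < arcosh x := arcosh_pos hx
  have h := U_real_cosh (arcosh x) n
  rw [cosh_arcosh hx.le] at h
  have hsinh : 0 < sinh ((n + 1) * arcosh x) := sinh_pos_iff.mpr (by positivity)
  exact pos_of_mul_pos_left (h ▸ hsinh) (sinh_pos_iff.mpr hθ).le

theorem eval_derivative_T_real_pos {n : ℤ} (hn : 0 < n) {x : ℝ} (hx : 1 < x) :
    0 < (derivative (T ℝ n)).eval x := by
  rw [T_derivative_eq_U, eval_mul, eval_intCast]
  exact mul_pos (by exact_mod_cast hn) (eval_U_real_pos (by omega) hx)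

end Polynomial.Chebyshev

section Spectral

variable {n : Type*} [Fintype n] [DecidableEq n]

theorem aeval_mul_mul_aeval_le_smul {A : Matrix n n ℝ} (hA : A.IsHermitian) (p : ℝ[X]) {c : ℝ}
    (hp : ∀ μ ∈ spectrum ℝ A, p.eval μ * μ * p.eval μ ≤ c * μ) :
    aeval A p * A * aeval A p ≤ c • A := by
  have ha : IsSelfAdjoint A := hA.isSelfAdjoint
  have hl : aeval A p * A * aeval A p = cfc (fun μ ↦ p.eval μ * μ * p.eval μ) A := by
    rw [cfc_mul (fun μ ↦ p.eval μ * μ) (p.eval ·) A, cfc_mul (p.eval ·) (fun μ ↦ μ) A,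
      cfc_polynomial p A, cfc_id' ℝ A]
  rw [hl, ← cfc_const_mul_id c A]
  exact cfc_mono hp

theorem dotProduct_mulVec_aeval_le {A : Matrix n n ℝ} (hA : A.IsHermitian) (p : ℝ[X]) {c : ℝ}
    (hp : ∀ μ ∈ spectrum ℝ A, p.eval μ * μ * p.eval μ ≤ c * μ) (w : n → ℝ) :
    (aeval A p *ᵥ w) ⬝ᵥ A *ᵥ (aeval A p *ᵥ w) ≤ c * (w ⬝ᵥ A *ᵥ w) := by
  have hM : (aeval A p)ᴴ = aeval A p := by
    rw [← cfc_polynomial p A hA.isSelfAdjoint]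
    exact cfc_predicate (R := ℝ) _ A
  have hquad : star w ⬝ᵥ ((aeval A p)ᴴ * A * aeval A p) *ᵥ w =
      star (aeval A p *ᵥ w) ⬝ᵥ A *ᵥ (aeval A p *ᵥ w) := by
    simp only [star_mulVec, dotProduct_mulVec, vecMul_vecMul]
  rw [hM, star_trivial, star_trivial] at hquad
  have hpsd :=
    (Matrix.le_iff.mp (aeval_mul_mul_aeval_le_smul hA p hp)).dotProduct_mulVec_nonneg w
  rw [star_trivial, sub_mulVec, dotProduct_sub, smul_mulVec, dotProduct_smul, smul_eq_mul,
    hquad] at hpsd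
  linarith

omit [DecidableEq n] in
theorem quadratic_sub_quadratic_of_mulVec_eq {A : Matrix n n ℝ} (hA : A.IsSymm)
    {b xstar : n → ℝ} (hxstar : A *ᵥ xstar = b) (y : n → ℝ) :
    (1 / 2 * (y ⬝ᵥ A *ᵥ y) - b ⬝ᵥ y) - (1 / 2 * (xstar ⬝ᵥ A *ᵥ xstar) - b ⬝ᵥ xstar) =
      1 / 2 * ((y - xstar) ⬝ᵥ A *ᵥ (y - xstar)) := by
  have hsymm : xstar ⬝ᵥ A *ᵥ y = b ⬝ᵥ y := by
    rw [dotProduct_mulVec, ← mulVec_transpose, hA.eq, hxstar]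
  simp only [mulVec_sub, dotProduct_sub, sub_dotProduct, hsymm, hxstar, dotProduct_comm y b,
    dotProduct_comm xstar b]
  ring

end Spectral

section Parameters

variable {s : ℕ} {η : ℝ}

theorem one_lt_omega0 (hs : 0 < s) (hη : 0 < η) : 1 < omega0 s η := by
  have : 0 < η / (s : ℝ) ^ 2 := by positivity
  rw [omega0]
  linarith

theorem omega1_pos (hs : 0 < s) (hη : 0 < η) : 0 < omega1 s η := by
  have hω₀ := one_lt_omega0 hs hη
  exact div_pos (one_pos.trans_le (Chebyshev.one_le_eval_T_real _ hω₀.le))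
    (Chebyshev.eval_derivative_T_real_pos (by exact_mod_cast hs) hω₀)

theorem abs_eval_RsPoly_le {z : ℝ} (hz : |omega0 s η + omega1 s η * z| ≤ 1) :
    |(RsPoly s η).eval z| ≤ |alphaS s η| := by
  simp only [RsPoly, eval_mul, eval_C, eval_comp, eval_add, eval_X, abs_mul]
  exact mul_le_of_le_one_right (abs_nonneg _) (Chebyshev.abs_eval_T_real_le_one _ hz)

theorem sub_one_mul_le_two_mul_stages_sq (κ η : ℝ) : (κ - 1) * η ≤ 2 * (stages κ η : ℝ) ^ 2 := by
  have := (Real.sqrt_le_iff.mp (Nat.le_ceil √((κ - 1) * η / 2))).2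
  rw [stages]
  linarith

theorem stages_pos {κ : ℝ} (hκ : 1 < κ) (hη : 0 < η) : 0 < stages κ η := by
  have : 0 < (κ - 1) * η / 2 := by have := sub_pos.2 hκ; positivity
  exact Nat.ceil_pos.mpr (Real.sqrt_pos.mpr this)

theorem abs_omega0_add_omega1_mul_stepSize_le_one {ℓ L μ : ℝ} (hℓ : 0 < ℓ) (hκ : 1 < L / ℓ)
    (hη : 0 < η) (hμ : μ ∈ Set.Icc ℓ L) :
    |omega0 (stages (L / ℓ) η) η + omega1 (stages (L / ℓ) η) η * (-stepSize (L / ℓ) η ℓ * μ)|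
      ≤ 1 := by
  set s := stages (L / ℓ) η
  have hω₁ := (omega1_pos (stages_pos hκ hη) hη).ne'
  have hω₀ : omega0 s η - 1 = η / (s : ℝ) ^ 2 := by rw [omega0]; ring
  have harg : omega0 s η + omega1 s η * (-stepSize (L / ℓ) η ℓ * μ) =
      1 - η / (s : ℝ) ^ 2 * (μ / ℓ - 1) := by
    rw [stepSize, ← hω₀]
    field_simp
    ring
  have hμℓ : 1 ≤ μ / ℓ := (one_le_div hℓ).mpr hμ.1
  have hμL : μ / ℓ ≤ L / ℓ := by gcongr; exact hμ.2
  have hs := sub_one_mul_le_two_mul_stages_sq (L / ℓ) η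
  have hle : η / (s : ℝ) ^ 2 * (μ / ℓ - 1) ≤ 2 := by
    rw [div_mul_eq_mul_div, div_le_iff₀ (by have := stages_pos hκ hη; positivity)]
    nlinarith
  have hnonneg : 0 ≤ η / (s : ℝ) ^ 2 * (μ / ℓ - 1) := by
    have := sub_nonneg.2 hμℓ
    positivity
  rw [harg, abs_le]
  constructor <;> linarith

end Parameters

theorem esgd_quadratic_decay_general {d : ℕ} (ℓ L η : ℝ) (hℓ : 0 < ℓ)
    (hκ : 1 < L / ℓ) (hη : 0 < η)
    (A : Matrix (Fin d) (Fin d) ℝ) (hA : A.PosDef)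
    (hspec : spectrum ℝ A ⊆ Set.Icc ℓ L)
    (b : Fin d → ℝ) (f : (Fin d → ℝ) → ℝ)
    (hf : ∀ x, f x = (1 / 2) * (x ⬝ᵥ A.mulVec x) - b ⬝ᵥ x)
    (xstar : Fin d → ℝ) (hxstar : xstar = A⁻¹.mulVec b)
    (x : ℕ → Fin d → ℝ)
    (hiter : ∀ n, x (n + 1) - xstar =
      (Polynomial.aeval ((-(stepSize (L / ℓ) η ℓ)) • A)
          (RsPoly (stages (L / ℓ) η) η)).mulVec (x n - xstar)) :
    ∀ n, f (x (n + 1)) - f xstar ≤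
      (alphaS (stages (L / ℓ) η) η) ^ 2 * (f (x n) - f xstar) := by
  intro n
  set α := alphaS (stages (L / ℓ) η) η
  set p := (RsPoly (stages (L / ℓ) η) η).comp (C (-stepSize (L / ℓ) η ℓ) * X)
  have hAxstar : A *ᵥ xstar = b := by
    rw [hxstar, mulVec_mulVec, mul_nonsing_inv A hA.det_pos.ne'.isUnit, one_mulVec]
  have hstep : x (n + 1) - xstar = aeval A p *ᵥ (x n - xstar) := by
    rw [hiter n, aeval_comp, map_mul, aeval_C, aeval_X, ← Algebra.smul_def]
  have hp : ∀ μ ∈ spectrum ℝ A, p.eval μ * μ * p.eval μ ≤ α ^ 2 * μ := by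
    intro μ hμ
    have hr := sq_le_sq.mpr <| abs_eval_RsPoly_le <|
      abs_omega0_add_omega1_mul_stepSize_le_one hℓ hκ hη (hspec hμ)
    simp only [p, eval_comp, eval_mul, eval_C, eval_X]
    nlinarith [hℓ.trans_le (hspec hμ).1]
  have hdecay := dotProduct_mulVec_aeval_le hA.isHermitian p hp (x n - xstar)
  have hsymm : A.IsSymm := isHermitian_iff_isSymm.mp hA.isHermitian
  rw [hf, hf, hf, quadratic_sub_quadratic_of_mulVec_eq hsymm hAxstar,
    quadratic_sub_quadratic_of_mulVec_eq hsymm hAxstar, hstep]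
  linarith

/-- ESGD on a strongly convex quadratic: if `A` is symmetric positive definite with all
eigenvalues in `[ℓ, L]`, `κ = L/ℓ > 1`, `f(x) = ½xᵀAx − bᵀx` with minimizer `x* = A⁻¹b`,
and the iterates satisfy `x_{n+1} − x* = R_s(−hA)(xₙ − x*)` with the ESGD parameters
`s`, `h`, then `f(x_{n+1}) − f(x*) ≤ α_s(η)² (f(xₙ) − f(x*))` for every `n`. -/
theorem esgd_quadratic_decay {d : ℕ} (ℓ L η : ℝ) (hℓ : 0 < ℓ) (hℓL : ℓ ≤ L)
    (hκ : 1 < L / ℓ) (hη : 0 < η)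
    (A : Matrix (Fin d) (Fin d) ℝ) (hA : A.PosDef)
    (hspec : spectrum ℝ A ⊆ Set.Icc ℓ L)
    (b : Fin d → ℝ) (f : (Fin d → ℝ) → ℝ)
    (hf : ∀ x, f x = (1 / 2) * (x ⬝ᵥ A.mulVec x) - b ⬝ᵥ x)
    (xstar : Fin d → ℝ) (hxstar : xstar = A⁻¹.mulVec b)
    (x : ℕ → Fin d → ℝ)
    (hiter : ∀ n, x (n + 1) - xstar =
      (Polynomial.aeval ((-(stepSize (L / ℓ) η ℓ)) • A)
          (RsPoly (stages (L / ℓ) η) η)).mulVec (x n - xstar)) :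
    ∀ n, f (x (n + 1)) - f xstar ≤
      (alphaS (stages (L / ℓ) η) η) ^ 2 * (f (x n) - f xstar) :=
  esgd_quadratic_decay_general ℓ L η hℓ hκ hη A hA hspec b f hf xstar hxstar x hiter
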